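/- arXiv:1907.10010 — 3 statements merged into one kernel-verified Lean document; each statement's English description precedes it below -/
import Mathlib

section
/- Let ω ∈ ℂ be a primitive k-th root of unity with k ≥ 2, let n ≥ 1, and let D = diag(1, ω, ..., ω^{n-1}) ∈ M_n(ℂ). Suppose there exist matrices x_0, ..., x_d ∈ M_n(ℂ) such that each x_j is normal, D x_j D^{-1} = ω x_j for all j, and Σ_{j=0}^d x_j x_j^* = 1. Then k divides n. -/
/-!
Conjugation by `D` scales `x_j` by `ω`, so `x_j` maps the `ω ^ m`-eigenspace of `D` into the
`ω ^ (m + 1)`-eigenspace: `x_j P_m = P_{m+1} x_j` for the spectral projections `P_m`, indexed by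
`m : ZMod k`. Cycling the trace and using normality,
`tr P_{m+1} = ∑ tr (x_j P_m x_jᴴ) = ∑ tr (P_m x_jᴴ x_j) = ∑ tr (P_m x_j x_jᴴ) = tr P_m`,
so all `k` eigenspaces have the same dimension, and they add up to `n`.
-/

open Finset Matrix

theorem IsPrimitiveRoot.natCast_eq_natCast_of_pow_eq_pow {M : Type*} [CommMonoid M] {ω : M}
    {k : ℕ} (hω : IsPrimitiveRoot ω k) (hk : k ≠ 0) {a b : ℕ} (h : ω ^ a = ω ^ b) :
    (a : ZMod k) = b := by
  rw [ZMod.natCast_eq_natCast_iff, hω.eq_orderOf]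
  exact (hω.isOfFinOrder hk).pow_eq_pow_iff_modEq.mp h

namespace Matrix

variable {ι R : Type*} [Fintype ι] [DecidableEq ι]

theorem apply_eq_zero_of_diagonal_conj_eq_smul {K : Type*} [Field K] {e : ι → K}
    (he : ∀ i, e i ≠ 0) {c : K} {x : Matrix ι ι K}
    (hx : diagonal e * x * (diagonal e)⁻¹ = c • x) {r s : ι} (hrs : e r ≠ c * e s) :
    x r s = 0 := by
  have hinv : (diagonal e)⁻¹ = diagonal fun i => (e i)⁻¹ :=
    inv_eq_right_inv (by simp [diagonal_mul_diagonal, he])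
  have h := congrFun₂ hx r s
  rw [hinv, mul_diagonal, diagonal_mul, smul_apply, smul_eq_mul, mul_inv_eq_iff_eq_mul₀ (he s),
    mul_right_comm, mul_comm (e r), mul_comm (c * e s)] at h
  exact (mul_eq_mul_left_iff.mp h).resolve_left hrs

/-- For `f i = (i : ZMod k)` this is the spectral projection of `diagonal fun i => ω ^ i` onto
its `ω ^ m`-eigenspace. -/
def fiberProj [Semiring R] {G : Type*} [DecidableEq G] (f : ι → G) (m : G) : Matrix ι ι R :=
  diagonal fun i => if f i = m then 1 else 0

theorem trace_fiberProj [Semiring R] {G : Type*} [DecidableEq G] (f : ι → G) (m : G) :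
    trace (fiberProj f m : Matrix ι ι R) = #{i | f i = m} := by
  simp [fiberProj, trace, sum_boole]

theorem mul_fiberProj [Semiring R] {G : Type*} [AddGroup G] [DecidableEq G] {f : ι → G} {a : G}
    {x : Matrix ι ι R} (hx : ∀ r s, x r s ≠ 0 → f r = f s + a) (m : G) :
    x * fiberProj f m = fiberProj f (m + a) * x := by
  ext r s
  by_cases h : x r s = 0
  · simp [fiberProj, h]
  · simp [fiberProj, hx r s h]

theorem trace_eq_trace_of_intertwines [CommSemiring R] {J : Type*} [Fintype J]
    {x y : J → Matrix ι ι R} (hcomm : ∀ j, x j * y j = y j * x j) (hsum : ∑ j, x j * y j = 1)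
    {p q : Matrix ι ι R} (hpq : ∀ j, x j * p = q * x j) : trace q = trace p :=
  calc trace q = trace (q * ∑ j, x j * y j) := by rw [hsum, Matrix.mul_one]
    _ = ∑ j, trace (x j * p * y j) := by
        simp only [Finset.mul_sum, trace_sum, ← Matrix.mul_assoc, hpq]
    _ = ∑ j, trace (p * (y j * x j)) := by
        refine Finset.sum_congr rfl fun j _ => ?_
        rw [Matrix.mul_assoc, trace_mul_comm, Matrix.mul_assoc]
    _ = trace (p * ∑ j, x j * y j) := by simp only [hcomm, Finset.mul_sum, trace_sum]
    _ = trace p := by rw [hsum, Matrix.mul_one]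

end Matrix

theorem ZMod.dvd_card_of_card_fiber_add_one_eq {α : Type*} [Fintype α] {k : ℕ} [NeZero k]
    (f : α → ZMod k) (hf : ∀ m, #{a | f a = m + 1} = #{a | f a = m}) : k ∣ Fintype.card α := by
  have hconst : ∀ m, #{a | f a = m} = #{a | f a = 0} := by
    intro m
    rw [← ZMod.natCast_zmod_val m]
    induction m.val with
    | zero => rw [Nat.cast_zero]
    | succ i ih => rw [Nat.cast_succ, hf, ih]
  refine ⟨#{a | f a = 0}, ?_⟩
  rw [← card_univ, card_eq_sum_card_fiberwise (t := univ) (f := f) fun _ _ => mem_univ _]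
  simp [hconst]

theorem dvd_of_normal_spectral_partition_general
    (k n d : ℕ) (hk : 2 ≤ k) (ω : ℂ) (hω : IsPrimitiveRoot ω k)
    (D : Matrix (Fin n) (Fin n) ℂ) (hD : D = Matrix.diagonal fun i : Fin n => ω ^ (i : ℕ))
    (x : Fin (d + 1) → Matrix (Fin n) (Fin n) ℂ)
    (hnormal : ∀ j, x j * star (x j) = star (x j) * x j)
    (hdeg : ∀ j, D * x j * D⁻¹ = ω • x j)
    (hsum : ∑ j, x j * star (x j) = 1) :
    k ∣ n := by
  have hk0 : k ≠ 0 := by omega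
  have : NeZero k := ⟨hk0⟩
  let f : Fin n → ZMod k := fun i => ((i : ℕ) : ZMod k)
  have hshift : ∀ j r s, x j r s ≠ 0 → f r = f s + 1 := by
    intro j r s hrs
    subst hD
    have hpow : ω ^ (r : ℕ) = ω ^ ((s : ℕ) + 1) := by
      by_contra hne
      exact hrs (apply_eq_zero_of_diagonal_conj_eq_smul
        (fun i => pow_ne_zero _ (hω.ne_zero hk0)) (hdeg j) (by rwa [← pow_succ']))
    simpa [f] using hω.natCast_eq_natCast_of_pow_eq_pow hk0 hpow
  have hcard : ∀ m, #{i | f i = m + 1} = #{i | f i = m} := by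
    intro m
    have htrace : trace (fiberProj f (m + 1) : Matrix (Fin n) (Fin n) ℂ) = trace (fiberProj f m) :=
      trace_eq_trace_of_intertwines hnormal hsum fun j => mul_fiberProj (hshift j) m
    rw [trace_fiberProj, trace_fiberProj] at htrace
    exact_mod_cast htrace
  simpa using ZMod.dvd_card_of_card_fiber_add_one_eq f hcard

theorem dvd_of_normal_spectral_partition
    (k n d : ℕ) (hk : 2 ≤ k) (hn : 1 ≤ n) (ω : ℂ) (hω : IsPrimitiveRoot ω k)
    (D : Matrix (Fin n) (Fin n) ℂ) (hD : D = Matrix.diagonal fun i : Fin n => ω ^ (i : ℕ))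
    (x : Fin (d + 1) → Matrix (Fin n) (Fin n) ℂ)
    (hnormal : ∀ j, x j * star (x j) = star (x j) * x j)
    (hdeg : ∀ j, D * x j * D⁻¹ = ω • x j)
    (hsum : ∑ j, x j * star (x j) = 1) :
    k ∣ n :=
  dvd_of_normal_spectral_partition_general k n d hk ω hω D hD x hnormal hdeg hsum
end

section
/- Let u be a unitary in M_n(ℂ) with u^k = 1, let ω be a primitive k-th root of unity, and let V_i = ker(u - ω^i·1) for i ∈ ℤ/k. Suppose x_0, ..., x_d ∈ M_n(ℂ) satisfy u x_j u^* = ω x_j for all j and Σ_{j=0}^d x_j x_j^* = 1 = Σ_{j=0}^d x_j^* x_j. Then dim V_i = dim V_{i+1} for all i ∈ ℤ/k; i.e., all eigenspaces of u have the same dimension, and in particular k divides n. -/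
/-!
For `a ^ k = 1`, the projection onto the `μ`-eigenspace of `a` is
`P μ = k⁻¹ • ∑_{m < k} (μ⁻¹ • a) ^ m`, whose trace is the dimension of that eigenspace.
The relation `u x = ω x u` gives `P (ω μ) x = x P μ`, so from `∑ x_j x_j^* = 1 = ∑ x_j^* x_j`
and cyclicity of the trace, `tr P (ω μ) = ∑ tr (x_j P μ x_j^*) = ∑ tr (x_j^* x_j P μ) = tr P μ`.
Orthogonality of the powers of `ω` gives `∑_{i < k} P (ω ^ i) = 1`, so `n = k dim V_0`.
-/

open Finset Module

theorem LinearMap.trace_eq_of_mul_eq_mul {R M ι : Type*} [CommRing R] [AddCommGroup M]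
    [Module R M] [Module.Free R M] [Module.Finite R M] [Fintype ι] {p q : End R M}
    (x y : ι → End R M) (hqp : ∀ j, q * x j = x j * p)
    (hxy : ∑ j, x j * y j = 1) (hyx : ∑ j, y j * x j = 1) :
    trace R M q = trace R M p :=
  calc trace R M q = trace R M (q * ∑ j, x j * y j) := by rw [hxy, mul_one]
    _ = ∑ j, trace R M (x j * p * y j) := by simp only [mul_sum, ← mul_assoc, hqp, map_sum]
    _ = ∑ j, trace R M (y j * (x j * p)) := sum_congr rfl fun j _ => trace_mul_comm R _ _
    _ = trace R M p := by simp only [← mul_assoc, ← map_sum, ← sum_mul, hyx, one_mul]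

section Algebra

variable {K A : Type*} [Field K] [Ring A] [Algebra K A]

noncomputable def eigenProj (k : ℕ) (a : A) (μ : K) : A :=
  (k : K)⁻¹ • ∑ m ∈ range k, (μ⁻¹ • a) ^ m

variable {k : ℕ} {a : A} {μ : K}

theorem mul_eigenProj (ha : a ^ k = 1) (hμ : μ ^ k = 1) :
    a * eigenProj k a μ = μ • eigenProj k a μ := by
  rcases eq_or_ne k 0 with rfl | hk
  · simp [eigenProj]
  have hμ0 : μ ≠ 0 := (IsUnit.of_pow_eq_one hμ hk).ne_zero
  have hfix : (μ⁻¹ • a - 1) * ∑ m ∈ range k, (μ⁻¹ • a) ^ m = 0 := by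
    rw [mul_geom_sum, smul_pow, ha, inv_pow, hμ, inv_one, one_smul, sub_self]
  rw [sub_mul, one_mul, sub_eq_zero] at hfix
  rw [eigenProj, mul_smul_comm, smul_comm μ]
  congr 1
  calc a * ∑ m ∈ range k, (μ⁻¹ • a) ^ m
      = μ • ((μ⁻¹ • a) * ∑ m ∈ range k, (μ⁻¹ • a) ^ m) := by
        rw [smul_mul_assoc, smul_smul, mul_inv_cancel₀ hμ0, one_smul]
    _ = μ • ∑ m ∈ range k, (μ⁻¹ • a) ^ m := by rw [hfix]

theorem eigenProj_mul_eq_mul_eigenProj {ω : K} {x : A} (hω : ω ≠ 0)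
    (hx : a * x = ω • (x * a)) :
    eigenProj k a (ω * μ) * x = x * eigenProj k a μ := by
  have hstep : x * (μ⁻¹ • a) = ((ω * μ)⁻¹ • a) * x := by
    rw [smul_mul_assoc, hx, smul_smul, mul_inv_rev, mul_assoc, inv_mul_cancel₀ hω, mul_one,
      mul_smul_comm]
  have hpow (m : ℕ) : ((ω * μ)⁻¹ • a) ^ m * x = x * (μ⁻¹ • a) ^ m :=
    (SemiconjBy.pow_right hstep m).symm
  simp only [eigenProj, smul_mul_assoc, mul_smul_comm, sum_mul, mul_sum, hpow]

theorem sum_eigenProj_pow_eq_one {ω : K} (hω : IsPrimitiveRoot ω k) (hk : (k : K) ≠ 0) :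
    ∑ i ∈ range k, eigenProj k a (ω ^ i) = 1 := by
  have hchar : ∀ m ∈ range k,
      ∑ i ∈ range k, ((ω ^ i)⁻¹) ^ m = if m = 0 then (k : K) else 0 := by
    intro m hm
    split_ifs with h0
    · simp [h0]
    have hz : ω⁻¹ ^ m ≠ 1 := hω.inv.pow_ne_one_of_pos_of_lt h0 (mem_range.mp hm)
    have hzk : (ω⁻¹ ^ m) ^ k = 1 := by rw [← pow_mul, pow_mul', hω.inv.pow_eq_one, one_pow]
    calc ∑ i ∈ range k, ((ω ^ i)⁻¹) ^ m = ∑ i ∈ range k, (ω⁻¹ ^ m) ^ i := by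
          congr! 1 with i; rw [← inv_pow, ← pow_mul, ← pow_mul, mul_comm]
      _ = 0 := by rw [geom_sum_eq hz, hzk, sub_self, zero_div]
  have hk0 : 0 ∈ range k := mem_range.mpr (Nat.pos_of_ne_zero (by rintro rfl; simp at hk))
  calc ∑ i ∈ range k, eigenProj k a (ω ^ i)
      = (k : K)⁻¹ • ∑ m ∈ range k, (∑ i ∈ range k, ((ω ^ i)⁻¹) ^ m) • a ^ m := by
        simp only [eigenProj, ← smul_sum, smul_pow, sum_smul]
        rw [sum_comm]
    _ = 1 := by
        rw [sum_congr rfl fun m hm => by rw [hchar m hm]]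
        simp [ite_smul, hk0, hk]

end Algebra

section LinearMap

variable {K M : Type*} [Field K] [AddCommGroup M] [Module K M] {k : ℕ} {f : End K M} {μ : K}

theorem isProj_eigenProj (hf : f ^ k = 1) (hμ : μ ^ k = 1) (hk : (k : K) ≠ 0) :
    LinearMap.IsProj (f.eigenspace μ) (eigenProj k f μ) where
  map_mem v := by
    rw [End.mem_eigenspace_iff, ← End.mul_apply, mul_eigenProj hf hμ, LinearMap.smul_apply]
  map_id v hv := by
    have hμ0 : μ ≠ 0 := (IsUnit.of_pow_eq_one hμ (by rintro rfl; exact hk Nat.cast_zero)).ne_zero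
    have hfix (m : ℕ) : ((μ⁻¹ • f) ^ m) v = v := by
      induction m with
      | zero => rfl
      | succ m ih =>
        rw [pow_succ, End.mul_apply, LinearMap.smul_apply, End.mem_eigenspace_iff.mp hv,
          smul_smul, inv_mul_cancel₀ hμ0, one_smul, ih]
    simp [eigenProj, hfix, ← Nat.cast_smul_eq_nsmul K, smul_smul, hk]

theorem trace_eigenProj_eq_finrank [FiniteDimensional K M] (hf : f ^ k = 1)
    (hμ : μ ^ k = 1) (hk : (k : K) ≠ 0) :
    LinearMap.trace K M (eigenProj k f μ) = finrank K (f.eigenspace μ) :=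
  (isProj_eigenProj hf hμ hk).trace

variable [CharZero K] [FiniteDimensional K M]

theorem finrank_eigenspace_mul_eq {ι : Type*} [Fintype ι] {ω : K} (hk : k ≠ 0)
    (hf : f ^ k = 1) (hω : ω ^ k = 1) (hμ : μ ^ k = 1) (x y : ι → End K M)
    (hx : ∀ j, f * x j = ω • (x j * f)) (hxy : ∑ j, x j * y j = 1)
    (hyx : ∑ j, y j * x j = 1) :
    finrank K (f.eigenspace (ω * μ)) = finrank K (f.eigenspace μ) := by
  have hk' : (k : K) ≠ 0 := Nat.cast_ne_zero.mpr hk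
  have hω0 : ω ≠ 0 := (IsUnit.of_pow_eq_one hω hk).ne_zero
  have htrace := LinearMap.trace_eq_of_mul_eq_mul x y
    (fun j => eigenProj_mul_eq_mul_eigenProj (k := k) (μ := μ) hω0 (hx j)) hxy hyx
  rw [trace_eigenProj_eq_finrank hf (by rw [mul_pow, hω, hμ, one_mul]) hk',
    trace_eigenProj_eq_finrank hf hμ hk'] at htrace
  exact_mod_cast htrace

theorem sum_finrank_eigenspace_pow {ω : K} (hω : IsPrimitiveRoot ω k) (hk : k ≠ 0)
    (hf : f ^ k = 1) :
    ∑ i ∈ range k, finrank K (f.eigenspace (ω ^ i)) = finrank K M := by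
  have hk' : (k : K) ≠ 0 := Nat.cast_ne_zero.mpr hk
  have hμ (i : ℕ) : (ω ^ i) ^ k = 1 := by rw [pow_right_comm, hω.pow_eq_one, one_pow]
  have : ∑ i ∈ range k, (finrank K (f.eigenspace (ω ^ i)) : K) = finrank K M := by
    simp only [← trace_eigenProj_eq_finrank hf (hμ _) hk', ← map_sum,
      sum_eigenProj_pow_eq_one hω hk', LinearMap.trace_one]
  exact_mod_cast this

end LinearMap

theorem eigenspaces_equidimensional_of_unit_sum_general
    (k n d : ℕ) (hk : 2 ≤ k) (ω : ℂ) (hω : IsPrimitiveRoot ω k)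
    (u : Matrix (Fin n) (Fin n) ℂ) (hu : star u * u = 1) (huk : u ^ k = 1)
    (V : ℕ → Submodule ℂ (Fin n → ℂ))
    (hV : ∀ i, V i = LinearMap.ker (Matrix.toLin' (u - ω ^ i • (1 : Matrix (Fin n) (Fin n) ℂ))))
    (x : Fin (d + 1) → Matrix (Fin n) (Fin n) ℂ)
    (hdeg : ∀ j, u * x j * star u = ω • x j)
    (hsum : ∑ j, x j * star (x j) = 1)
    (hsum' : ∑ j, star (x j) * x j = 1) :
    (∀ i : ℕ, Module.finrank ℂ (V i) = Module.finrank ℂ (V (i + 1))) ∧ k ∣ n := by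
  let φ := Matrix.toLinAlgEquiv' (R := ℂ) (n := Fin n)
  have hk0 : k ≠ 0 := by omega
  have hV' (i : ℕ) : V i = End.eigenspace (φ u) (ω ^ i) := by
    rw [hV, End.eigenspace_def, ← map_one φ, ← map_smul, ← map_sub]
    rfl
  have hφu : φ u ^ k = 1 := by rw [← map_pow, huk, map_one]
  have hux (j : Fin (d + 1)) : φ u * φ (x j) = ω • (φ (x j) * φ u) := by
    rw [← map_mul, ← map_mul, ← map_smul, ← smul_mul_assoc, ← hdeg, mul_assoc _ (star u), hu,
      mul_one]
  have hequi (i : ℕ) : finrank ℂ (V i) = finrank ℂ (V (i + 1)) := by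
    rw [hV', hV', pow_succ']
    refine (finrank_eigenspace_mul_eq hk0 hφu hω.pow_eq_one ?_ (fun j => φ (x j))
      (fun j => φ (star (x j))) hux ?_ ?_).symm
    · rw [pow_right_comm, hω.pow_eq_one, one_pow]
    · simp only [← map_mul, ← map_sum, hsum, map_one]
    · simp only [← map_mul, ← map_sum, hsum', map_one]
  have hconst (i : ℕ) : finrank ℂ (V i) = finrank ℂ (V 0) := by
    induction i with
    | zero => rfl
    | succ i ih => rw [← hequi, ih]
  refine ⟨hequi, finrank ℂ (V 0), ?_⟩
  calc n = finrank ℂ (Fin n → ℂ) := (finrank_fin_fun ℂ).symm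
    _ = ∑ i ∈ range k, finrank ℂ (End.eigenspace (φ u) (ω ^ i)) :=
        (sum_finrank_eigenspace_pow hω hk0 hφu).symm
    _ = ∑ i ∈ range k, finrank ℂ (V i) := sum_congr rfl fun i _ => by rw [hV']
    _ = k * finrank ℂ (V 0) := by simp only [hconst, sum_const, card_range, smul_eq_mul]

theorem eigenspaces_equidimensional_of_unit_sum
    (k n d : ℕ) (hk : 2 ≤ k) (hn : 1 ≤ n) (ω : ℂ) (hω : IsPrimitiveRoot ω k)
    (u : Matrix (Fin n) (Fin n) ℂ) (hu : star u * u = 1) (huk : u ^ k = 1)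
    (V : ℕ → Submodule ℂ (Fin n → ℂ))
    (hV : ∀ i, V i = LinearMap.ker (Matrix.toLin' (u - ω ^ i • (1 : Matrix (Fin n) (Fin n) ℂ))))
    (x : Fin (d + 1) → Matrix (Fin n) (Fin n) ℂ)
    (hdeg : ∀ j, u * x j * star u = ω • x j)
    (hsum : ∑ j, x j * star (x j) = 1)
    (hsum' : ∑ j, star (x j) * x j = 1) :
    (∀ i : ℕ, Module.finrank ℂ (V i) = Module.finrank ℂ (V (i + 1))) ∧ k ∣ n :=
  eigenspaces_equidimensional_of_unit_sum_general k n d hk ω hω u hu huk V hV x hdeg hsum hsum'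
end

section
/- Let a and b be commuting normal elements of a unital C*-algebra A. Then a^* b = b a^* (and consequently the C*-subalgebra generated by a and b is commutative). -/
theorem fuglede_putnam_commuting_normals_general
    {A : Type*} [NormedRing A] [StarRing A] [CStarRing A] [CompleteSpace A]
    [NormedAlgebra ℂ A] [StarModule ℂ A]
    (a b : A) (ha : IsStarNormal a) (hab : a * b = b * a) :
    star a * b = b * star a := by
  let : CStarAlgebra A := {}
  exact ha.commute_star_left hab

theorem fuglede_putnam_commuting_normals
    {A : Type*} [NormedRing A] [StarRing A] [CStarRing A] [CompleteSpace A]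
    [NormedAlgebra ℂ A] [StarModule ℂ A]
    (a b : A) (ha : IsStarNormal a) (hb : IsStarNormal b) (hab : a * b = b * a) :
    star a * b = b * star a :=
  fuglede_putnam_commuting_normals_general a b ha hab
end
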